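/- Let m be an integer, p a prime, and (U_e) the generalized Fibonacci sequence with parameter m. Suppose e ≥ 1 is the least positive integer (the entry point) such that p divides U_e. Then for every n ≥ 1: T_n(m)^{4e} ≡ I_n (mod p); moreover, if e is even then T_n(m)^{2e} ≡ I_n (mod p). -/

import Mathlib

/-- The generalized Fibonacci sequence with parameter `m`:
`U_0 = 0`, `U_1 = 1`, `U_{e+1} = m U_e + U_{e-1}`. -/
def genFibU {R : Type*} [CommRing R] (m : R) : ℕ → R
  | 0 => 0
  | 1 => 1
  | e + 2 => m * genFibU m (e + 1) + genFibU m e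

/-- The `n × n` generalized Fibonacci matrix `T_n(m)`, with 1-based `(i,j)` entry
`m^{i+j-n-1} C(i-1, n-j)` when `i + j ≥ n + 1` and `0` otherwise. -/
def genFibMatrix {R : Type*} [CommRing R] (m : R) (n : ℕ) :
    Matrix (Fin n) (Fin n) R :=
  Matrix.of fun i j =>
    if n ≤ i.val + j.val + 1 then
      m ^ (i.val + j.val + 1 - n) * (Nat.choose i.val (n - 1 - j.val) : R)
    else 0

namespace GenFibAux

open MvPolynomial

variable {R : Type*} [CommRing R] {S : Type*} [CommRing S]

/-! ### Generalized Fibonacci sequence lemmas -/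

lemma map_genFibU (f : R →+* S) (m : R) : ∀ k, f (genFibU m k) = genFibU (f m) k
  | 0 => by simp [genFibU]
  | 1 => by simp [genFibU]
  | (k+2) => by
      simp only [genFibU, map_add, map_mul, map_genFibU f m (k+1), map_genFibU f m k]

lemma cassini (m : R) : ∀ d : ℕ,
    genFibU m (d+2) * genFibU m d - genFibU m (d+1) ^ 2 = (-1) ^ (d+1)
  | 0 => by simp [genFibU]
  | (d+1) => by
      have hIH := cassini m d
      have hrec : genFibU m (d+3) = m * genFibU m (d+2) + genFibU m (d+1) := by
        simp [genFibU]
      have hrec2 : genFibU m (d+2) = m * genFibU m (d+1) + genFibU m d := by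
        simp [genFibU]
      have hpow : ((-1 : R)) ^ (d+2) = -(-1 : R) ^ (d+1) := by
        rw [pow_succ]; ring
      show genFibU m (d+3) * genFibU m (d+1) - genFibU m (d+2) ^ 2 = (-1 : R) ^ (d+2)
      rw [hrec, hpow]
      linear_combination (-1 : R) * hIH - genFibU m (d+2) * hrec2

/-! ### Bivariate homogeneous polynomials and the symmetric power matrix -/

noncomputable def lin (a c : R) : MvPolynomial (Fin 2) R := C a * X 0 + C c * X 1

noncomputable def dd (s j : ℕ) : Fin 2 →₀ ℕ := Finsupp.single 0 j + Finsupp.single 1 (s - j)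

lemma pair_eq_iff (a b a' b' : ℕ) :
    (Finsupp.single (0:Fin 2) a + Finsupp.single 1 b
      = Finsupp.single 0 a' + Finsupp.single 1 b') ↔ (a = a' ∧ b = b') := by
  constructor
  · intro h
    constructor
    · have := DFunLike.congr_fun h 0; simpa using this
    · have := DFunLike.congr_fun h 1; simpa using this
  · rintro ⟨rfl, rfl⟩; rfl

lemma monomial_dd (s j : ℕ) (r : R) :
    (monomial (dd s j) r : MvPolynomial (Fin 2) R) = C r * X 0 ^ j * X 1 ^ (s - j) := by
  rw [dd, X_pow_eq_monomial, X_pow_eq_monomial, C_apply, monomial_mul, monomial_mul]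
  simp

lemma lin_isHomogeneous (a c : R) : (lin a c).IsHomogeneous 1 :=
  (isHomogeneous_C_mul_X a 0).add (isHomogeneous_C_mul_X c 1)

lemma row_isHomogeneous (a b c d : R) (s i : ℕ) (hi : i ≤ s) :
    ((lin a c) ^ i * (lin b d) ^ (s - i)).IsHomogeneous s := by
  have := ((lin_isHomogeneous a c).pow i).mul ((lin_isHomogeneous b d).pow (s - i))
  simpa [one_mul, Nat.add_sub_cancel' hi] using this

lemma degree_fin2 (d : Fin 2 →₀ ℕ) : d.degree = d 0 + d 1 := by
  rw [Finsupp.degree_apply]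
  rw [Finset.sum_subset (Finset.subset_univ d.support)]
  · simp [Fin.sum_univ_two]
  · intro x _ hx
    simpa using (Finsupp.notMem_support_iff.mp hx)

/-- A homogeneous bivariate polynomial of degree `s` is the sum of its monomials
`x^j y^(s-j)` for `0 ≤ j ≤ s`. -/
lemma rep {s : ℕ} {f : MvPolynomial (Fin 2) R} (hf : f.IsHomogeneous s) :
    f = ∑ j ∈ Finset.range (s+1), monomial (dd s j) (coeff (dd s j) f) := by
  have hsub : f.support ⊆ (Finset.range (s+1)).image (dd s) := by
    intro d hd
    have hco : coeff d f ≠ 0 := MvPolynomial.mem_support_iff.mp hd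
    have hdeg : d 0 + d 1 = s := by
      have := hf hco
      rw [show (Finsupp.weight 1 : (Fin 2 →₀ ℕ) →+ ℕ) = Finsupp.weight (fun _ => 1) from rfl,
        ← Finsupp.degree_eq_weight_one, degree_fin2] at this
      omega
    refine Finset.mem_image.mpr ⟨d 0, Finset.mem_range.mpr (by omega), ?_⟩
    ext i
    fin_cases i <;> simp [dd, Finsupp.single_apply] <;> omega
  have hinj : ∀ j ∈ Finset.range (s+1), ∀ j' ∈ Finset.range (s+1),
      dd s j = dd s j' → j = j' := by
    intro j _ j' _ h
    have := DFunLike.congr_fun h 0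
    simpa [dd, Finsupp.single_apply] using this
  calc f = ∑ d ∈ f.support, monomial d (coeff d f) := (support_sum_monomial_coeff f).symm
    _ = ∑ d ∈ (Finset.range (s+1)).image (dd s), monomial d (coeff d f) := by
        refine Finset.sum_subset hsub ?_
        intro d _ hd
        rw [MvPolynomial.notMem_support_iff.mp hd, monomial_zero]
    _ = ∑ j ∈ Finset.range (s+1), monomial (dd s j) (coeff (dd s j) f) :=
        Finset.sum_image hinj

lemma coeff_dd_CXX (s j u v : ℕ) (r : R) :
    coeff (dd s j) (C r * X 0 ^ u * X 1 ^ v) = if j = u ∧ s - j = v then r else 0 := by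
  rw [X_pow_eq_monomial, X_pow_eq_monomial, C_apply, monomial_mul, monomial_mul,
    mul_one, mul_one, zero_add, coeff_monomial]
  unfold dd
  by_cases h : j = u ∧ s - j = v
  · rw [if_pos (pair_eq_iff _ _ _ _ |>.mpr ⟨h.1.symm, h.2.symm⟩), if_pos h]
  · rw [if_neg (fun hc => h ⟨((pair_eq_iff _ _ _ _).mp hc).1.symm,
      ((pair_eq_iff _ _ _ _).mp hc).2.symm⟩), if_neg h]

lemma coeff_dd_CXX' (s j u v : ℕ) (r r' : R) :
    coeff (dd s j) (C r * X 0 ^ u * (C r' * X 1 ^ v)) = if j = u ∧ s - j = v then r * r' else 0 := by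
  have h : (C r * X 0 ^ u * (C r' * X 1 ^ v) : MvPolynomial (Fin 2) R)
      = C (r * r') * X 0 ^ u * X 1 ^ v := by
    rw [C_mul]; ring
  rw [h]
  exact coeff_dd_CXX s j u v (r * r')

/-- The `(n-1)`-st symmetric power of the 2×2 matrix `[[a,b],[c,d]]`, for `n = s+1`. -/
noncomputable def sp (s : ℕ) (a b c d : R) : Matrix (Fin (s+1)) (Fin (s+1)) R :=
  Matrix.of fun i j => coeff (dd s j) ((lin a c) ^ (i:ℕ) * (lin b d) ^ (s - (i:ℕ)))

lemma sp_mul (s : ℕ) (a b c d a' b' c' d' : R) :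
    sp s a b c d * sp s a' b' c' d' =
      sp s (a*a'+c*b') (b*a'+d*b') (a*c'+c*d') (b*c'+d*d') := by
  ext i k
  have hi : (i:ℕ) ≤ s := Nat.lt_succ_iff.mp i.isLt
  simp only [Matrix.mul_apply, sp, Matrix.of_apply]
  set φ : MvPolynomial (Fin 2) R →ₐ[R] MvPolynomial (Fin 2) R :=
    aeval ![lin a' c', lin b' d'] with hφ
  have hx0 : φ (X 0) = lin a' c' := by simp [hφ]
  have hx1 : φ (X 1) = lin b' d' := by simp [hφ]
  have hC : ∀ r : R, φ (C r) = C r := by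
    intro r; rw [hφ]; simp [algebraMap_eq]
  have hlin1 : φ (lin a c) = lin (a*a'+c*b') (a*c'+c*d') := by
    rw [lin, map_add, map_mul, map_mul, hx0, hx1, hC, hC]
    simp only [lin, C_add, C_mul]
    ring
  have hlin2 : φ (lin b d) = lin (b*a'+d*b') (b*c'+d*d') := by
    rw [lin, map_add, map_mul, map_mul, hx0, hx1, hC, hC]
    simp only [lin, C_add, C_mul]
    ring
  have key : φ ((lin a c) ^ (i:ℕ) * (lin b d) ^ (s - (i:ℕ)))
      = (lin (a*a'+c*b') (a*c'+c*d')) ^ (i:ℕ)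
        * (lin (b*a'+d*b') (b*c'+d*d')) ^ (s - (i:ℕ)) := by
    rw [map_mul, map_pow, map_pow, hlin1, hlin2]
  rw [← key]
  conv_rhs => rw [rep (row_isHomogeneous a b c d s i hi)]
  rw [map_sum, MvPolynomial.coeff_sum]
  rw [Fin.sum_univ_eq_sum_range
    (fun j => coeff (dd s j) ((lin a c) ^ (i:ℕ) * (lin b d) ^ (s - (i:ℕ))) *
      coeff (dd s k) ((lin a' c') ^ j * (lin b' d') ^ (s - j)))]
  refine Finset.sum_congr rfl ?_
  intro j hj
  rw [monomial_dd, map_mul, map_mul, map_pow, map_pow, hx0, hx1, hC]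
  rw [mul_assoc, coeff_C_mul]

lemma sp_genFib (s : ℕ) (m : R) : sp s m 1 1 0 = genFibMatrix m (s+1) := by
  ext i j
  have hi : (i:ℕ) ≤ s := Nat.lt_succ_iff.mp i.isLt
  have hj : (j:ℕ) ≤ s := Nat.lt_succ_iff.mp j.isLt
  simp only [sp, Matrix.of_apply, genFibMatrix, Nat.add_sub_cancel]
  have h10 : (lin (1:R) 0) = X 0 := by simp [lin]
  have hm1 : (lin m 1) = C m * X 0 + X 1 := by simp [lin]
  rw [h10, hm1, add_pow, Finset.sum_mul, MvPolynomial.coeff_sum]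
  have hterm : ∀ k : ℕ,
      (C m * X 0) ^ k * (X 1 : MvPolynomial (Fin 2) R) ^ ((i:ℕ) - k)
          * ((i:ℕ).choose k : MvPolynomial (Fin 2) R) * X 0 ^ (s - (i:ℕ))
      = C (m ^ k * ((i:ℕ).choose k : R)) * X 0 ^ (k + (s - (i:ℕ))) * X 1 ^ ((i:ℕ) - k) := by
    intro k
    rw [show (((i:ℕ).choose k : ℕ) : MvPolynomial (Fin 2) R)
        = C (((i:ℕ).choose k : ℕ) : R) from by push_cast [C_eq_coe_nat]; norm_cast]
    rw [mul_pow, ← C_pow, C_mul, pow_add]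
    ring
  by_cases hcase : s ≤ (i:ℕ) + (j:ℕ)
  · rw [if_pos (by omega)]
    rw [Finset.sum_eq_single ((i:ℕ) + (j:ℕ) - s)]
    · rw [hterm, coeff_dd_CXX, if_pos (by omega)]
      congr 2
      · omega
      · rw [← Nat.choose_symm (show s - (j:ℕ) ≤ (i:ℕ) by omega)]
        congr 1
        omega
    · intro k hk hne
      rw [hterm, coeff_dd_CXX, if_neg (by omega)]
    · intro h
      exact absurd (Finset.mem_range.mpr (by omega)) h
  · rw [if_neg (by omega)]
    refine Finset.sum_eq_zero ?_
    intro k hk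
    have hk' : k ≤ (i:ℕ) := Nat.lt_succ_iff.mp (Finset.mem_range.mp hk)
    rw [hterm, coeff_dd_CXX, if_neg (by omega)]

lemma sp_diag_entry (s : ℕ) (a d : R) (i j : Fin (s+1)) :
    sp s a 0 0 d i j = if i = j then a ^ (i:ℕ) * d ^ (s - (i:ℕ)) else 0 := by
  have hi : (i:ℕ) ≤ s := Nat.lt_succ_iff.mp i.isLt
  have hj : (j:ℕ) ≤ s := Nat.lt_succ_iff.mp j.isLt
  simp only [sp, Matrix.of_apply]
  have h1 : (lin a (0:R)) = C a * X 0 := by simp [lin]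
  have h2 : (lin (0:R) d) = C d * X 1 := by simp [lin]
  rw [h1, h2, mul_pow, mul_pow, ← C_pow, ← C_pow, coeff_dd_CXX']
  by_cases h : i = j
  · subst h; rw [if_pos ⟨rfl, rfl⟩, if_pos rfl]
  · rw [if_neg (fun hc => h (Fin.ext (by omega))), if_neg h]

lemma sp_one (s : ℕ) : sp s (1:R) 0 0 1 = 1 := by
  ext i j
  rw [sp_diag_entry, Matrix.one_apply]
  simp

lemma sp_diag_sq (s : ℕ) (a d : R) :
    sp s a 0 0 d ^ 2 = sp s (a^2) 0 0 (d^2) := by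
  rw [sq, sp_mul]
  norm_num [← sq]

/-- Powers of the generalized Fibonacci matrix. -/
lemma sp_pow (s : ℕ) (m : R) : ∀ d : ℕ,
    sp s m 1 1 0 ^ (d+1)
      = sp s (genFibU m (d+2)) (genFibU m (d+1)) (genFibU m (d+1)) (genFibU m d)
  | 0 => by
      rw [pow_one]
      show _ = sp s (genFibU m 2) (genFibU m 1) (genFibU m 1) (genFibU m 0)
      norm_num [genFibU]
  | (d+1) => by
      rw [pow_succ', sp_pow s m d, sp_mul]
      have h3 : genFibU m (d+3) = m * genFibU m (d+2) + genFibU m (d+1) := by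
        simp [genFibU]
      have h2 : genFibU m (d+2) = m * genFibU m (d+1) + genFibU m d := by
        simp [genFibU]
      have e1 : m * genFibU m (d+2) + 1 * genFibU m (d+1) = genFibU m (d+3) := by
        rw [h3]; ring
      have e2 : 1 * genFibU m (d+2) + 0 * genFibU m (d+1) = genFibU m (d+2) := by ring
      have e3 : m * genFibU m (d+1) + 1 * genFibU m d = genFibU m (d+2) := by
        rw [h2]; ring
      have e4 : 1 * genFibU m (d+1) + 0 * genFibU m d = genFibU m (d+1) := by ring
      rw [e1, e2, e3, e4]

end GenFibAux



open GenFibAux in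
/-- If `e ≥ 1` is the entry point of the prime `p` in the sequence `U`, then
`T_n(m)^{4e} ≡ I_n (mod p)` for every `n ≥ 1`; moreover if `e` is even then already
`T_n(m)^{2e} ≡ I_n (mod p)`. -/
theorem genFibMatrix_pow_entryPoint_four (m : ℤ) (p : ℕ) (hp : p.Prime)
    (e : ℕ) (he : 1 ≤ e) (hdvd : (p : ℤ) ∣ genFibU m e)
    (hleast : ∀ e' : ℕ, 1 ≤ e' → e' < e → ¬ (p : ℤ) ∣ genFibU m e') :
    ∀ n : ℕ, 1 ≤ n →
      (((genFibMatrix m n) ^ (4 * e)).map (Int.cast : ℤ → ZMod p)) = 1 ∧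
      (Even e →
        (((genFibMatrix m n) ^ (2 * e)).map (Int.cast : ℤ → ZMod p)) = 1) := by
  intro n hn
  obtain ⟨s, rfl⟩ : ∃ s, n = s + 1 := ⟨n - 1, by omega⟩
  obtain ⟨d, rfl⟩ : ∃ d, e = d + 1 := ⟨e - 1, by omega⟩
  set K := ZMod p
  set mm : K := (m : K) with hmm
  have hmap : (genFibMatrix m (s+1)).map (Int.cast : ℤ → K) = genFibMatrix mm (s+1) := by
    ext i j
    simp only [Matrix.map_apply, genFibMatrix, Matrix.of_apply]
    split_ifs with h
    · rw [hmm, Int.cast_mul, Int.cast_pow, Int.cast_natCast]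
    · simp
  have hpow : ∀ k : ℕ, ((genFibMatrix m (s+1)) ^ k).map (Int.cast : ℤ → K)
      = (genFibMatrix mm (s+1)) ^ k := by
    intro k
    have h1 : ((genFibMatrix m (s+1)) ^ k).map (Int.cast : ℤ → K)
        = (Int.castRingHom K).mapMatrix ((genFibMatrix m (s+1)) ^ k) := by
      rw [RingHom.mapMatrix_apply]
      norm_cast
    rw [h1, map_pow, RingHom.mapMatrix_apply, Int.coe_castRingHom, hmap]
  have hU0 : genFibU mm (d+1) = 0 := by
    have h1 := map_genFibU (Int.castRingHom K) m (d+1)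
    have h2 : ((genFibU m (d+1) : ℤ) : ZMod p) = 0 :=
      (ZMod.intCast_zmod_eq_zero_iff_dvd _ p).mpr hdvd
    rw [show mm = (Int.castRingHom K) m from rfl, ← h1]
    simpa using h2
  have hrec : genFibU mm (d+2) = mm * genFibU mm (d+1) + genFibU mm d := by
    simp [genFibU]
  have hur : genFibU mm (d+2) = genFibU mm d := by
    rw [hrec, hU0]; ring
  have hcas : genFibU mm (d+2) * genFibU mm d = (-1 : K) ^ (d+1) := by
    have := cassini mm d
    rw [hU0] at this
    linear_combination this
  rw [← hur] at hcas
  have hA : genFibMatrix mm (s+1) = sp s mm 1 1 0 := (sp_genFib s mm).symm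
  have hAe : genFibMatrix mm (s+1) ^ (d+1)
      = sp s (genFibU mm (d+2)) 0 0 (genFibU mm (d+2)) := by
    rw [hA, sp_pow s mm d, hU0, ← hur]
  have h2e : genFibMatrix mm (s+1) ^ (2*(d+1)) = sp s ((-1:K)^(d+1)) 0 0 ((-1:K)^(d+1)) := by
    rw [show 2*(d+1) = (d+1)*2 by ring, pow_mul, hAe, sp_diag_sq,
      show genFibU mm (d+2) ^ 2 = (-1:K)^(d+1) from by rw [sq]; exact hcas]
  have hε2 : ((-1:K)^(d+1)) ^ 2 = 1 := by
    rw [← pow_mul]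
    exact Even.neg_one_pow ⟨d+1, by ring⟩
  constructor
  · rw [hpow, show 4*(d+1) = (2*(d+1))*2 by ring, pow_mul, h2e, sp_diag_sq, hε2, sp_one]
  · intro heven
    rw [hpow, h2e, Even.neg_one_pow heven, sp_one]
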